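/- Let α : Z → C be in ℓ^2 and suppose its discrete Fourier transform α̂ is supported (mod 2π) in {θ : |θ| ≤ κh} ∪ {θ : |θ - π| ≤ κh} with κh ≤ π/4. Then the shifted difference satisfies ‖α_{·+1} - α_{·-1}‖_{ℓ^2} ≤ 2 κh ‖α‖_{ℓ^2}. -/

import Mathlib

/-!
Writing `α̂` for the Fourier series `∑ αₙ e^{-inθ}` on the circle, the shifts `α_{n±1}` have
transforms `e^{±iθ} α̂`, so the difference `α_{n+1} - α_{n-1}` has transform `2i sin θ · α̂`.
On the support of `α̂` we have `|sin θ| ≤ κh` (near `π` use `sin θ = -sin (θ - π)`), and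
Parseval turns this pointwise bound into the `ℓ²` bound.
-/

open Real MeasureTheory

namespace AddCircle

/-- `dtft T a` is `θ ↦ ∑ aₙ e^{-2πinθ/T}`, summed in `C(AddCircle T, ℂ)` (junk value `0` unless
the series is summable there). -/
noncomputable def dtft (T : ℝ) [Fact (0 < T)] (a : ℤ → ℂ) : C(AddCircle T, ℂ) :=
  ∑' n, a n • fourier (-n)

variable {T : ℝ} [Fact (0 < T)] {a b : ℤ → ℂ}

theorem summable_smul_fourier_neg (ha : Summable (‖a ·‖)) :
    Summable fun n ↦ a n • (fourier (-n) : C(AddCircle T, ℂ)) :=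
  .of_norm <| by simpa only [norm_smul, fourier_norm, mul_one] using ha

theorem dtft_apply (ha : Summable (‖a ·‖)) (x : AddCircle T) :
    dtft T a x = ∑' n, a n * fourier (-n) x :=
  (ContinuousMap.tsum_apply (summable_smul_fourier_neg ha) x).symm

theorem fourierCoeff_dtft (ha : Summable (‖a ·‖)) (m : ℤ) :
    fourierCoeff (dtft T a) m = a (-m) := by
  let coeff : C(AddCircle T, ℂ) →L[ℂ] ℂ :=
    (lp.evalCLM ℂ (fun _ : ℤ ↦ ℂ) 2 m).comp <|
      fourierBasis.repr.toContinuousLinearEquiv.toContinuousLinearMap.comp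
        (ContinuousMap.toLp 2 haarAddCircle ℂ)
  have hcoeff (f : C(AddCircle T, ℂ)) : coeff f = fourierCoeff f m := by
    rw [← fourierCoeff_toLp, ← fourierBasis_repr]
    rfl
  rw [← hcoeff, dtft, coeff.map_tsum (summable_smul_fourier_neg ha)]
  simp_rw [map_smul, hcoeff, fourierCoeff_fourier, smul_eq_mul]
  rw [tsum_eq_single (-m) fun n hn ↦ by rw [Pi.single_apply, if_neg (by omega), mul_zero]]
  simp

theorem tsum_sq_norm_eq_integral_dtft (ha : Summable (‖a ·‖)) :
    ∑' n, ‖a n‖ ^ 2 = ∫ t, ‖dtft T a t‖ ^ 2 ∂haarAddCircle := by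
  let f := ContinuousMap.toLp (E := ℂ) 2 haarAddCircle ℂ (dtft T a)
  calc ∑' n, ‖a n‖ ^ 2 = ∑' m, ‖fourierCoeff f m‖ ^ 2 := by
        rw [← (Equiv.neg ℤ).tsum_eq]
        simp only [f, fourierCoeff_toLp, fourierCoeff_dtft ha, Equiv.neg_apply]
    _ = ∫ t, ‖f t‖ ^ 2 ∂haarAddCircle := tsum_sq_fourierCoeff f
    _ = ∫ t, ‖dtft T a t‖ ^ 2 ∂haarAddCircle := integral_congr_ae <|
        (ContinuousMap.coeFn_toLp _ _).fun_comp (‖·‖ ^ 2)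

theorem dtft_sub (ha : Summable (‖a ·‖)) (hb : Summable (‖b ·‖)) :
    dtft T (a - b) = dtft T a - dtft T b := by
  simp only [dtft, Pi.sub_apply, sub_smul]
  exact (summable_smul_fourier_neg ha).tsum_sub (summable_smul_fourier_neg hb)

theorem dtft_comp_add_right (ha : Summable (‖a ·‖)) (k : ℤ) :
    dtft T (fun n ↦ a (n + k)) = fourier k * dtft T a := by
  ext x
  rw [ContinuousMap.mul_apply, dtft_apply ha,
    dtft_apply (ha.comp_injective (add_left_injective k)),
    ← tsum_mul_left, ← (Equiv.subRight k).tsum_eq]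
  refine tsum_congr fun n ↦ ?_
  rw [Equiv.subRight_apply, sub_add_cancel, show -(n - k) = k + -n by ring, fourier_add]
  ring

theorem tsum_sq_norm_le_of_norm_dtft_le (ha : Summable (‖a ·‖)) (hb : Summable (‖b ·‖)) {C : ℝ}
    (h : ∀ x : AddCircle T, ‖dtft T b x‖ ≤ C * ‖dtft T a x‖) :
    ∑' n, ‖b n‖ ^ 2 ≤ C ^ 2 * ∑' n, ‖a n‖ ^ 2 := by
  have hint (c : ℤ → ℂ) : Integrable (fun t ↦ ‖dtft T c t‖ ^ 2) haarAddCircle :=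
    ((dtft T c).continuous.norm.pow 2).integrable_of_hasCompactSupport (.of_compactSpace _)
  rw [tsum_sq_norm_eq_integral_dtft (T := T) ha, tsum_sq_norm_eq_integral_dtft (T := T) hb,
    ← integral_const_mul]
  exact integral_mono (hint b) ((hint a).const_mul _) fun x ↦
    (pow_le_pow_left₀ (norm_nonneg _) (h x) 2).trans_eq (mul_pow _ _ _)

theorem dtft_comp_add_sub_comp_sub (ha : Summable (‖a ·‖)) (k : ℤ) :
    dtft T (fun n ↦ a (n + k) - a (n - k)) = (fourier k - fourier (-k)) * dtft T a := by
  have hshift (j : ℤ) : Summable fun n ↦ ‖a (n + j)‖ := ha.comp_injective (add_left_injective j)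
  have hsplit : (fun n ↦ a (n + k) - a (n - k)) = (fun n ↦ a (n + k)) - fun n ↦ a (n + -k) := by
    ext n
    rw [Pi.sub_apply, ← sub_eq_add_neg]
  rw [hsplit, dtft_sub (hshift k) (hshift (-k)), dtft_comp_add_right ha, dtft_comp_add_right ha,
    sub_mul]

end AddCircle

open AddCircle

instance fact_two_pi_pos : Fact (0 < 2 * π) := ⟨two_pi_pos⟩

theorem fourier_coe_two_pi (n : ℤ) (θ : ℝ) :
    fourier n (θ : AddCircle (2 * π)) = Complex.exp (Complex.I * n * θ) := by
  rw [fourier_coe_apply]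
  congr 1
  field_simp
  push_cast
  ring

theorem norm_fourier_one_sub_fourier_neg_one (θ : ℝ) :
    ‖(fourier 1 - fourier (-1) : C(AddCircle (2 * π), ℂ)) θ‖ = 2 * |sin θ| := by
  have h : Complex.exp (Complex.I * θ) - Complex.exp (-Complex.I * θ)
      = 2 * Real.sin θ * Complex.I := by
    rw [Complex.ofReal_sin, Complex.sin]
    ring_nf
    rw [Complex.I_sq]
    ring
  rw [ContinuousMap.sub_apply, fourier_coe_two_pi, fourier_coe_two_pi, Int.cast_one, Int.cast_neg,
    Int.cast_one, mul_one, mul_neg_one, h, norm_mul, norm_mul, Complex.norm_I, mul_one,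
    Complex.norm_real, Real.norm_eq_abs, Complex.norm_two]

theorem abs_sin_le_of_abs_le_or_abs_sub_pi_le {θ r : ℝ} (h : |θ| ≤ r ∨ |θ - π| ≤ r) :
    |sin θ| ≤ r := by
  rcases h with h | h
  · exact abs_sin_le_abs.trans h
  · rw [← abs_neg, ← sin_sub_pi]
    exact abs_sin_le_abs.trans h

theorem dtft_two_pi_coe {a : ℤ → ℂ} (ha : Summable (‖a ·‖)) (θ : ℝ) :
    dtft (2 * π) a θ = ∑' n, a n * Complex.exp (-Complex.I * n * θ) := by
  rw [dtft_apply ha]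
  refine tsum_congr fun n ↦ ?_
  rw [fourier_coe_two_pi]
  push_cast
  ring_nf

theorem norm_dtft_comp_add_one_sub_comp_sub_one_le {a : ℤ → ℂ} (ha : Summable (‖a ·‖))
    {r : ℝ} (hr : 0 ≤ r) (c : ℝ)
    (hsupp : ∀ θ ∈ Set.Ico c (c + 2 * π), ¬(|θ| ≤ r ∨ |θ - π| ≤ r) → dtft (2 * π) a θ = 0)
    (x : AddCircle (2 * π)) :
    ‖dtft (2 * π) (fun n ↦ a (n + 1) - a (n - 1)) x‖ ≤ 2 * r * ‖dtft (2 * π) a x‖ := by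
  obtain ⟨θ, hθ, rfl⟩ : x ∈ ((↑) : ℝ → AddCircle (2 * π)) '' Set.Ico c (c + 2 * π) := by
    rw [coe_image_Ico_eq]
    trivial
  rw [dtft_comp_add_sub_comp_sub ha, ContinuousMap.mul_apply, norm_mul,
    norm_fourier_one_sub_fourier_neg_one]
  by_cases hnear : |θ| ≤ r ∨ |θ - π| ≤ r
  · gcongr
    exact abs_sin_le_of_abs_le_or_abs_sub_pi_le hnear
  · rw [hsupp θ hθ hnear, norm_zero, mul_zero]
    positivity

theorem stmt12_general (κ h : ℝ) (hκ : 0 < κ) (hh : 0 < h)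
    (α : ℤ → ℂ) (hl1 : Summable fun n : ℤ => ‖α n‖)
    (hsupp : ∀ θ ∈ Set.Ico (-(π / 2)) (3 * π / 2),
      ¬(|θ| ≤ κ * h ∨ |θ - π| ≤ κ * h) →
        (∑' n : ℤ, α n * Complex.exp (-Complex.I * n * θ)) = 0) :
    Real.sqrt (∑' n : ℤ, ‖α (n + 1) - α (n - 1)‖ ^ 2)
      ≤ 2 * κ * h * Real.sqrt (∑' n : ℤ, ‖α n‖ ^ 2) := by
  have hβ : Summable fun n ↦ ‖α (n + 1) - α (n - 1)‖ :=
    ((hl1.comp_injective (add_left_injective 1)).add (hl1.comp_injective sub_left_injective)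
      ).of_nonneg_of_le (fun _ ↦ norm_nonneg _) fun _ ↦ norm_sub_le _ _
  have hsupp_dtft : ∀ θ ∈ Set.Ico (-(π / 2)) (-(π / 2) + 2 * π),
      ¬(|θ| ≤ κ * h ∨ |θ - π| ≤ κ * h) → dtft (2 * π) α θ = 0 := fun θ hθ hfar ↦ by
    rw [dtft_two_pi_coe hl1, hsupp θ (by convert hθ using 2; ring) hfar]
  have hbound := norm_dtft_comp_add_one_sub_comp_sub_one_le hl1 (by positivity) _ hsupp_dtft
  calc √(∑' n, ‖α (n + 1) - α (n - 1)‖ ^ 2)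
      ≤ √((2 * (κ * h)) ^ 2 * ∑' n, ‖α n‖ ^ 2) :=
        sqrt_le_sqrt (tsum_sq_norm_le_of_norm_dtft_le hl1 hβ hbound)
    _ = 2 * κ * h * √(∑' n, ‖α n‖ ^ 2) := by
        rw [sqrt_mul (sq_nonneg _), sqrt_sq (by positivity)]
        ring

/-- If `α ∈ ℓ²(ℤ)` (with absolutely convergent Fourier series, so that its
discrete Fourier transform `α̂(θ) = ∑_n α_n e^{-inθ}` is defined pointwise) has `α̂` supported
(mod `2π`) in `{|θ| ≤ κh} ∪ {|θ - π| ≤ κh}` with `κh ≤ π/4`, then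
`‖α_{·+1} - α_{·-1}‖_{ℓ²} ≤ 2κh ‖α‖_{ℓ²}`. -/
theorem stmt12 (κ h : ℝ) (hκ : 0 < κ) (hh : 0 < h) (hκh : κ * h ≤ π / 4)
    (α : ℤ → ℂ) (hl1 : Summable fun n : ℤ => ‖α n‖)
    (hl2 : Summable fun n : ℤ => ‖α n‖ ^ 2)
    (hsupp : ∀ θ ∈ Set.Ico (-(π / 2)) (3 * π / 2),
      ¬(|θ| ≤ κ * h ∨ |θ - π| ≤ κ * h) →
        (∑' n : ℤ, α n * Complex.exp (-Complex.I * n * θ)) = 0) :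
    Real.sqrt (∑' n : ℤ, ‖α (n + 1) - α (n - 1)‖ ^ 2)
      ≤ 2 * κ * h * Real.sqrt (∑' n : ℤ, ‖α n‖ ^ 2) :=
  stmt12_general κ h hκ hh α hl1 hsupp
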